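/- arXiv:0801.2627 — 3 statements merged into one kernel-verified Lean document; each statement's English description precedes it below -/
import Mathlib

section
/- For every θ ∈ (0,π) and all real p, q, the kernel of T̂_θ admits the absolutely convergent expansion T̂_θ(p,q) = (sin θ/π) · Σ_{n=0}^∞ ((2 cos θ)^n / n!) · ∫_0^∞ s^n e^{−2 s sin²(θ)} (p q)^n e^{−s(p²+q²)} ds. -/
open MeasureTheory Real

noncomputable section

/-- The kernel of the integral operator `T̂_θ` on `L²(ℝ)`:
`T̂_θ(p,q) = (1/(2π sin θ)) · ((p² − 2 cos(θ)·p·q + q²)/(2 sin²(θ)) + 1)⁻¹`. -/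
def Tker (θ p q : ℝ) : ℝ :=
  (1 / (2 * Real.pi * Real.sin θ)) *
    ((p ^ 2 - 2 * Real.cos θ * p * q + q ^ 2) / (2 * Real.sin θ ^ 2) + 1)⁻¹

/-!
With `a = 2 sin²θ + p² + q²`, the `n`-th integral is a Gamma integral equal to `(pq)ⁿ n! / aⁿ⁺¹`,
so the series is geometric with ratio `2pq cos θ / a`. Since `2|pq| ≤ p² + q²` and `sin θ ≠ 0`,
this ratio has modulus `< 1`, and the geometric sum `sin θ / (π (a - 2pq cos θ))` is the kernel.
-/

open Set Nat

lemma integral_pow_mul_exp_neg_mul_Ioi {r : ℝ} (hr : 0 < r) (n : ℕ) :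
    ∫ t in Ioi (0 : ℝ), t ^ n * exp (-(r * t)) = n ! / r ^ (n + 1) := by
  have h := integral_rpow_mul_exp_neg_mul_Ioi (a := n + 1) (by positivity) hr
  simp_rw [add_sub_cancel_right, rpow_natCast] at h
  rw [h, Gamma_nat_eq_factorial, ← Nat.cast_add_one, rpow_natCast, one_div_pow, one_div_mul_eq_div]

lemma integral_pow_mul_exp_mul_pow_mul_exp_Ioi {β γ : ℝ} (h : 0 < 2 * β + γ) (x : ℝ) (n : ℕ) :
    ∫ s in Ioi (0 : ℝ), s ^ n * exp (-2 * s * β) * x ^ n * exp (-s * γ) =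
      x ^ n * (n ! / (2 * β + γ) ^ (n + 1)) := by
  have hexp (s : ℝ) : exp (-2 * s * β) * exp (-s * γ) = exp (-((2 * β + γ) * s)) := by
    rw [← exp_add]; ring_nf
  calc ∫ s in Ioi (0 : ℝ), s ^ n * exp (-2 * s * β) * x ^ n * exp (-s * γ)
      = ∫ s in Ioi (0 : ℝ), x ^ n * (s ^ n * exp (-((2 * β + γ) * s))) := by
        congr 1 with s; rw [← hexp]; ring
    _ = x ^ n * (n ! / (2 * β + γ) ^ (n + 1)) := by
        rw [integral_const_mul, integral_pow_mul_exp_neg_mul_Ioi h]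

lemma abs_two_mul_mul_mul_le_sq_add_sq {c : ℝ} (hc : |c| ≤ 1) (p q : ℝ) :
    |2 * p * q * c| ≤ p ^ 2 + q ^ 2 :=
  calc |2 * p * q * c| = 2 * |p| * |q| * |c| := by simp only [abs_mul, abs_two]
    _ ≤ 2 * |p| * |q| := mul_le_of_le_one_right (by positivity) hc
    _ ≤ |p| ^ 2 + |q| ^ 2 := two_mul_le_add_sq _ _
    _ = p ^ 2 + q ^ 2 := by rw [sq_abs, sq_abs]

lemma hasSum_div_mul_geometric {a b : ℝ} (hb : |b| < a) (c : ℝ) :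
    HasSum (fun n : ℕ => c / a * (b / a) ^ n) (c / (a - b)) := by
  have ha : 0 < a := (abs_nonneg b).trans_lt hb
  have hba : |b / a| < 1 := by rwa [abs_div, abs_of_pos ha, div_lt_one ha]
  have h := (hasSum_geometric_of_abs_lt_one hba).mul_left (c / a)
  rwa [one_sub_div ha.ne', inv_div, div_mul_div_cancel₀ ha.ne'] at h

lemma Tker_eq_div {θ : ℝ} (hθ : sin θ ≠ 0) (p q : ℝ) :
    Tker θ p q = sin θ / π / (2 * sin θ ^ 2 + (p ^ 2 + q ^ 2) - 2 * p * q * cos θ) := by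
  rw [Tker, div_add_one (by positivity), inv_div, show p ^ 2 - 2 * cos θ * p * q + q ^ 2 + 2 * sin θ ^ 2
      = 2 * sin θ ^ 2 + (p ^ 2 + q ^ 2) - 2 * p * q * cos θ by ring]
  field_simp

/-- For every `θ ∈ (0,π)` and all real `p, q`, the kernel of `T̂_θ` admits the absolutely
convergent expansion
`T̂_θ(p,q) = (sin θ/π) · Σ_{n=0}^∞ ((2 cos θ)^n / n!) · ∫_0^∞ s^n e^{−2 s sin²θ} (pq)^n e^{−s(p²+q²)} ds`. -/
theorem Tker_expansion (θ : ℝ) (hθ : θ ∈ Set.Ioo 0 Real.pi) (p q : ℝ) :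
    (Summable fun n : ℕ =>
      |Real.sin θ / Real.pi * ((2 * Real.cos θ) ^ n / (n.factorial : ℝ)) *
        ∫ s in Set.Ioi (0 : ℝ),
          s ^ n * Real.exp (-2 * s * Real.sin θ ^ 2) * (p * q) ^ n *
            Real.exp (-s * (p ^ 2 + q ^ 2))|) ∧
    HasSum (fun n : ℕ =>
      Real.sin θ / Real.pi * ((2 * Real.cos θ) ^ n / (n.factorial : ℝ)) *
        ∫ s in Set.Ioi (0 : ℝ),
          s ^ n * Real.exp (-2 * s * Real.sin θ ^ 2) * (p * q) ^ n *
            Real.exp (-s * (p ^ 2 + q ^ 2)))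
      (Tker θ p q) := by
  have hsin : sin θ ≠ 0 := (sin_pos_of_pos_of_lt_pi hθ.1 hθ.2).ne'
  set a := 2 * sin θ ^ 2 + (p ^ 2 + q ^ 2) with ha_def
  have ha : 0 < a := by positivity
  have hb : |2 * p * q * cos θ| < a :=
    (abs_two_mul_mul_mul_le_sq_add_sq (abs_cos_le_one θ) p q).trans_lt
      (lt_add_of_pos_left _ (by positivity))
  have hterm (n : ℕ) :
      sin θ / π * ((2 * cos θ) ^ n / n !) *
        ∫ s in Ioi (0 : ℝ), s ^ n * exp (-2 * s * sin θ ^ 2) * (p * q) ^ n *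
          exp (-s * (p ^ 2 + q ^ 2)) =
      sin θ / π / a * (2 * p * q * cos θ / a) ^ n := by
    rw [integral_pow_mul_exp_mul_pow_mul_exp_Ioi ha, ← ha_def, div_pow, pow_succ]
    field_simp
    ring
  have hsum := hasSum_div_mul_geometric hb (sin θ / π)
  simp only [hterm, Tker_eq_div hsin]
  exact ⟨hsum.summable.abs, hsum⟩
end
end

section
/- The function φ(p) = √(2/π) · (p²+1)⁻¹ belongs to L²(ℝ) and satisfies, for almost every p ∈ ℝ, (p²+2)^{−1/2} φ(p) + ∫_ℝ (1/π)(p²+q²+2)⁻¹ φ(q) dq = φ(p); that is, φ is an eigenfunction of T̂_0 + T̂_{π/2} with eigenvalue 1. -/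
open MeasureTheory Real

/-! With `a = √(p² + 2)` the kernel is `(q² + a²)⁻¹`, so partial fractions against `(q² + 1)⁻¹`
and `∫ (q² + c²)⁻¹ = π / c` give `(T̂_{π/2} φ)(p) = √(2/π) / (a (1 + a))`. Since
`p² + 1 = (a - 1)(a + 1)`, adding `(T̂₀ φ)(p) = √(2/π) / (a (a - 1)(a + 1))` gives back `φ(p)`.
Square integrability follows from `φ² ≤ φ · sup φ`. -/

lemma inv_sq_add_sq_eq_mul_inv_one_add_div_sq (x : ℝ) {c : ℝ} (hc : c ≠ 0) :
    (x ^ 2 + c ^ 2)⁻¹ = (c ^ 2)⁻¹ * (1 + (x / c) ^ 2)⁻¹ := by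
  field_simp
  ring

lemma integrable_inv_sq_add_sq {c : ℝ} (hc : c ≠ 0) :
    Integrable fun x : ℝ => (x ^ 2 + c ^ 2)⁻¹ := by
  simp_rw [inv_sq_add_sq_eq_mul_inv_one_add_div_sq _ hc]
  exact (integrable_inv_one_add_sq.comp_div hc).const_mul _

lemma integral_univ_inv_sq_add_sq {c : ℝ} (hc : 0 < c) :
    ∫ x : ℝ, (x ^ 2 + c ^ 2)⁻¹ = π / c := by
  simp_rw [inv_sq_add_sq_eq_mul_inv_one_add_div_sq _ hc.ne']
  rw [integral_const_mul, Measure.integral_comp_div (fun x : ℝ => (1 + x ^ 2)⁻¹) c,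
    integral_univ_inv_one_add_sq, abs_of_pos hc, smul_eq_mul]
  field_simp

lemma memLp_two_inv_sq_add_sq {c : ℝ} (hc : c ≠ 0) :
    MemLp (fun x : ℝ => (x ^ 2 + c ^ 2)⁻¹) 2 volume := by
  have hcont : Continuous fun x : ℝ => (x ^ 2 + c ^ 2)⁻¹ :=
    (by fun_prop : Continuous fun x : ℝ => x ^ 2 + c ^ 2).inv₀ fun x => by positivity
  rw [memLp_two_iff_integrable_sq hcont.aestronglyMeasurable]
  simp_rw [sq (_⁻¹)]
  refine (integrable_inv_sq_add_sq hc).mul_bdd hcont.aestronglyMeasurable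
    (c := (c ^ 2)⁻¹) (Filter.Eventually.of_forall fun x => ?_)
  rw [norm_inv, Real.norm_of_nonneg (by positivity)]
  gcongr
  nlinarith [sq_nonneg x]

lemma integral_inv_mul_sq_add_sq {b c : ℝ} (hb : 0 < b) (hc : 0 < c) (hbc : b ≠ c) :
    ∫ x : ℝ, ((x ^ 2 + b ^ 2) * (x ^ 2 + c ^ 2))⁻¹ = π / (b * c * (b + c)) := by
  have hsq : c ^ 2 - b ^ 2 ≠ 0 :=
    sub_ne_zero.2 fun h => hbc ((pow_left_inj₀ hb.le hc.le two_ne_zero).1 h.symm)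
  have hpf : ∀ x : ℝ, ((x ^ 2 + b ^ 2) * (x ^ 2 + c ^ 2))⁻¹ =
      (c ^ 2 - b ^ 2)⁻¹ * ((x ^ 2 + b ^ 2)⁻¹ - (x ^ 2 + c ^ 2)⁻¹) := fun x => by
    have : x ^ 2 + b ^ 2 ≠ 0 := by positivity
    have : x ^ 2 + c ^ 2 ≠ 0 := by positivity
    field_simp
    ring
  simp_rw [hpf]
  rw [integral_const_mul, integral_sub (integrable_inv_sq_add_sq hb.ne')
    (integrable_inv_sq_add_sq hc.ne'), integral_univ_inv_sq_add_sq hb,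
    integral_univ_inv_sq_add_sq hc]
  have : c - b ≠ 0 := sub_ne_zero.2 hbc.symm
  field_simp
  ring

lemma integral_kernel_piOverTwo_mul_inv_sq_add_one (p : ℝ) :
    ∫ q : ℝ, (p ^ 2 + q ^ 2 + 2)⁻¹ * (q ^ 2 + 1)⁻¹ =
      π / (√(p ^ 2 + 2) * (1 + √(p ^ 2 + 2))) := by
  set a := √(p ^ 2 + 2)
  have ha2 : a ^ 2 = p ^ 2 + 2 := sq_sqrt (by positivity)
  have ha1 : 1 < a := by nlinarith [sqrt_nonneg (p ^ 2 + 2)]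
  have h := integral_inv_mul_sq_add_sq one_pos (by linarith) ha1.ne
  simp only [one_pow, ha2, one_mul] at h
  rw [← h]
  congr 1 with q
  rw [mul_inv, mul_comm]
  ring_nf

lemma inv_sqrt_mul_add_integral_kernel_piOverTwo (p : ℝ) :
    (√(p ^ 2 + 2))⁻¹ * (p ^ 2 + 1)⁻¹ +
        ∫ q : ℝ, 1 / π * (p ^ 2 + q ^ 2 + 2)⁻¹ * (q ^ 2 + 1)⁻¹ = (p ^ 2 + 1)⁻¹ := by
  simp_rw [mul_assoc]
  rw [integral_const_mul, integral_kernel_piOverTwo_mul_inv_sq_add_one]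
  set a := √(p ^ 2 + 2)
  have ha2 : a ^ 2 = p ^ 2 + 2 := sq_sqrt (by positivity)
  have ha0 : 0 < a := by positivity
  rw [show p ^ 2 + 1 = a ^ 2 - 1 by linarith]
  have : a ^ 2 - 1 ≠ 0 := by nlinarith [sq_nonneg p]
  field_simp
  ring

/-- The eigenvalue equation `(T̂₀ + T̂_{π/2})φ = φ` for `φ(p) = √(2/π)·(p²+1)⁻¹`, where `T̂₀`
is multiplication by `(p²+2)^{−1/2}` and `T̂_{π/2}` is the integral operator on `L²(ℝ)` with
kernel `(1/π)(p²+q²+2)⁻¹`; in particular `φ ∈ L²(ℝ)`. -/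
theorem exact_eigenfunction_T0_plus_TpiOver2 :
    MemLp (fun p : ℝ => Real.sqrt (2 / Real.pi) * ((p ^ 2 + 1)⁻¹)) 2
      (volume : Measure ℝ) ∧
    ∀ᵐ p : ℝ,
      (Real.sqrt (p ^ 2 + 2))⁻¹ * (Real.sqrt (2 / Real.pi) * ((p ^ 2 + 1)⁻¹)) +
        ∫ q : ℝ, (1 / Real.pi) * (p ^ 2 + q ^ 2 + 2)⁻¹ *
          (Real.sqrt (2 / Real.pi) * ((q ^ 2 + 1)⁻¹)) =
      Real.sqrt (2 / Real.pi) * ((p ^ 2 + 1)⁻¹) := by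
  refine ⟨by simpa using (memLp_two_inv_sq_add_sq one_ne_zero).const_mul √(2 / π),
    Filter.Eventually.of_forall fun p => ?_⟩
  simp_rw [mul_left_comm _ √(2 / π), integral_const_mul, ← mul_add,
    inv_sqrt_mul_add_integral_kernel_piOverTwo]
end

section
/- The function φ(p) = 6^{3/4} / (√π (2p²+3)) belongs to L²(ℝ) and satisfies, for almost every p ∈ ℝ, (p²+2)^{−1/2} φ(p) + 2 ∫_ℝ T̂_{2π/3}(p,q) φ(q) dq = √2 · φ(p); that is, φ is an eigenfunction of T̂_0 + 2 T̂_{2π/3} with eigenvalue √2. -/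
/-!
At `θ = 2π/3` the kernel is `√3/π · (2q² + 2pq + 2p² + 3)⁻¹`, so for `φ₀(q) = (2q² + 3)⁻¹` the
integral term is `∫ dq / ((2q² + 2pq + 2p² + 3)(2q² + 3))`. Partial fractions give an explicit
primitive (the logarithm of the ratio of the two quadratics, with coefficient `1/(4p)`, plus two
arctangents), and its limits at `±∞` evaluate the integral to
`π (√2 - (p² + 2)^{-1/2}) / (2√3 (2p² + 3))`. The `(p² + 2)^{-1/2}` part cancels the `T̂₀` term,
leaving `√2 φ₀(p)` for every `p ≠ 0`; the factor `6^{3/4}/√π` only normalizes `φ₀`.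
-/

open MeasureTheory Real Filter Topology Bornology IsOrderBornology

noncomputable section

lemma integrable_inv_of_one_add_sq_le {f : ℝ → ℝ} (hf : Measurable f)
    (h : ∀ x, 1 + x ^ 2 ≤ f x) : Integrable fun x => (f x)⁻¹ := by
  refine integrable_inv_one_add_sq.mono' hf.inv.aestronglyMeasurable (ae_of_all _ fun x => ?_)
  have hx : 0 < 1 + x ^ 2 := by positivity
  rw [norm_inv, Real.norm_of_nonneg (hx.trans_le (h x)).le]
  exact inv_anti₀ hx (h x)

lemma memLp_two_inv_two_mul_sq_add_three :
    MemLp (fun x : ℝ => (2 * x ^ 2 + 3)⁻¹) 2 volume := by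
  refine (memLp_two_iff_integrable_sq (by fun_prop)).2 ?_
  simp_rw [inv_pow]
  exact integrable_inv_of_one_add_sq_le (by fun_prop) fun x => by nlinarith [sq_nonneg x]

lemma tendsto_log_sub_log_cobounded (p : ℝ) :
    Tendsto (fun x => log (2 * x ^ 2 + 2 * p * x + 2 * p ^ 2 + 3) - log (2 * x ^ 2 + 3))
      (cobounded ℝ) (𝓝 0) := by
  have hcont : Continuous fun y : ℝ =>
      log (2 + 2 * p * y + (2 * p ^ 2 + 3) * y ^ 2) - log (2 + 3 * y ^ 2) := by
    refine .sub (.log (by fun_prop) fun y => ?_) (.log (by fun_prop) fun y => by positivity)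
    nlinarith [sq_nonneg (1 + p * y), sq_nonneg y, sq_nonneg (p * y)]
  refine ((hcont.tendsto' 0 0 (by simp)).comp tendsto_inv₀_cobounded).congr' ?_
  filter_upwards [eventually_ne_cobounded 0] with x hx
  have hA : 0 < 2 * x ^ 2 + 2 * p * x + 2 * p ^ 2 + 3 := by
    nlinarith [sq_nonneg (x + p), sq_nonneg x, sq_nonneg p]
  have e1 : 2 + 2 * p * x⁻¹ + (2 * p ^ 2 + 3) * x⁻¹ ^ 2
      = (2 * x ^ 2 + 2 * p * x + 2 * p ^ 2 + 3) / x ^ 2 := by field_simp; ring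
  have e2 : 2 + 3 * x⁻¹ ^ 2 = (2 * x ^ 2 + 3) / x ^ 2 := by field_simp
  simp only [Function.comp_apply, e1, e2]
  rw [log_div hA.ne' (by positivity), log_div (by positivity) (by positivity)]
  ring

def kernelPrimitive (p x : ℝ) : ℝ :=
  (2 * p ^ 2 + 3)⁻¹ *
    ((4 * p)⁻¹ * (log (2 * x ^ 2 + 2 * p * x + 2 * p ^ 2 + 3) - log (2 * x ^ 2 + 3))
      - (2 * √(3 * p ^ 2 + 6))⁻¹ * arctan ((2 * x + p) / √(3 * p ^ 2 + 6))
      + (2 * √(3 / 2))⁻¹ * arctan (x / √(3 / 2)))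

lemma hasDerivAt_kernelPrimitive {p : ℝ} (hp : p ≠ 0) (x : ℝ) :
    HasDerivAt (kernelPrimitive p)
      ((2 * x ^ 2 + 2 * p * x + 2 * p ^ 2 + 3) * (2 * x ^ 2 + 3))⁻¹ x := by
  unfold kernelPrimitive
  set a := √(3 * p ^ 2 + 6)
  set s := √(3 / 2)
  have ha : 0 < a := by positivity
  have hs : 0 < s := by positivity
  have ha2 : a ^ 2 = 3 * p ^ 2 + 6 := sq_sqrt (by positivity)
  have hs2 : s ^ 2 = 3 / 2 := sq_sqrt (by norm_num)
  have hA : 0 < 2 * x ^ 2 + 2 * p * x + 2 * p ^ 2 + 3 := by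
    nlinarith [sq_nonneg (x + p), sq_nonneg x, sq_nonneg p]
  have hB : 0 < 2 * x ^ 2 + 3 := by positivity
  have hA' : HasDerivAt (fun x => 2 * x ^ 2 + 2 * p * x + 2 * p ^ 2 + 3) (4 * x + 2 * p) x :=
    ((((hasDerivAt_pow 2 x).const_mul 2).add ((hasDerivAt_id' x).const_mul (2 * p))).add_const
      (2 * p ^ 2)).add_const 3 |>.congr_deriv (by ring)
  have hB' : HasDerivAt (fun x => 2 * x ^ 2 + 3) (4 * x) x :=
    (((hasDerivAt_pow 2 x).const_mul 2).add_const 3).congr_deriv (by ring)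
  have hatan₁ : HasDerivAt (fun x => arctan ((2 * x + p) / a))
      (a / (2 * x ^ 2 + 2 * p * x + 2 * p ^ 2 + 3)) x := by
    refine (((hasDerivAt_id' x).const_mul 2).add_const p).div_const a |>.arctan |>.congr_deriv ?_
    rw [eq_div_iff hA.ne']
    field_simp
    linear_combination -ha2
  have hatan₂ : HasDerivAt (fun x => arctan (x / s)) (2 * s / (2 * x ^ 2 + 3)) x := by
    refine (hasDerivAt_id' x).div_const s |>.arctan |>.congr_deriv ?_
    field_simp
    linear_combination -2 * hs2
  refine ((((hA'.log hA.ne').sub (hB'.log hB.ne')).const_mul _).sub (hatan₁.const_mul _)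
    |>.add (hatan₂.const_mul _)).const_mul _ |>.congr_deriv ?_
  -- otherwise `field_simp` rewrites this quadratic into a shape it cannot see is nonzero
  generalize hAdef : 2 * x ^ 2 + 2 * p * x + 2 * p ^ 2 + 3 = A at hA
  field_simp
  rw [← hAdef]
  ring

lemma integral_inv_quadratic_mul_quadratic {p : ℝ} (hp : p ≠ 0) :
    ∫ x, ((2 * x ^ 2 + 2 * p * x + 2 * p ^ 2 + 3) * (2 * x ^ 2 + 3))⁻¹ =
      π / (2 * (2 * p ^ 2 + 3)) * ((√(3 / 2))⁻¹ - (√(3 * p ^ 2 + 6))⁻¹) := by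
  have hint :
      Integrable fun x => ((2 * x ^ 2 + 2 * p * x + 2 * p ^ 2 + 3) * (2 * x ^ 2 + 3))⁻¹ :=
    integrable_inv_of_one_add_sq_le (by fun_prop) fun x => by
      nlinarith [sq_nonneg (x + p), sq_nonneg x, sq_nonneg p, sq_nonneg (x * (x + p)),
        sq_nonneg (x * p)]
  have hlog := tendsto_log_sub_log_cobounded p
  have hbot : Tendsto (kernelPrimitive p) atBot (𝓝 _) :=
    have hatan := tendsto_nhds_of_tendsto_nhdsWithin tendsto_arctan_atBot
    have hlin : Tendsto (fun x : ℝ => 2 * x + p) atBot atBot :=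
      tendsto_atBot_add_const_right _ p (tendsto_id.const_mul_atBot two_pos)
    (((hlog.mono_left atBot_le_cobounded).const_mul _).sub
      ((hatan.comp (hlin.atBot_div_const (by positivity))).const_mul _) |>.add
      ((hatan.comp (tendsto_id.atBot_div_const (by positivity))).const_mul _)).const_mul _
  have htop : Tendsto (kernelPrimitive p) atTop (𝓝 _) :=
    have hatan := tendsto_nhds_of_tendsto_nhdsWithin tendsto_arctan_atTop
    have hlin : Tendsto (fun x : ℝ => 2 * x + p) atTop atTop :=
      tendsto_atTop_add_const_right _ p (tendsto_id.const_mul_atTop two_pos)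
    (((hlog.mono_left atTop_le_cobounded).const_mul _).sub
      ((hatan.comp (hlin.atTop_div_const (by positivity))).const_mul _) |>.add
      ((hatan.comp (tendsto_id.atTop_div_const (by positivity))).const_mul _)).const_mul _
  rw [integral_of_hasDerivAt_of_tendsto (hasDerivAt_kernelPrimitive hp) hint hbot htop]
  field_simp
  ring

lemma Tker_two_pi_div_three (p q : ℝ) :
    Tker (2 * π / 3) p q = √3 / π * (2 * q ^ 2 + 2 * p * q + 2 * p ^ 2 + 3)⁻¹ := by
  have hsin : sin (2 * π / 3) = √3 / 2 := by
    rw [show 2 * π / 3 = π - π / 3 by ring, sin_pi_sub, sin_pi_div_three]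
  have hcos : cos (2 * π / 3) = -(1 / 2) := by
    rw [show 2 * π / 3 = π - π / 3 by ring, cos_pi_sub, cos_pi_div_three]
  have h3 : √3 ^ 2 = 3 := sq_sqrt (by norm_num)
  rw [Tker, hsin, hcos, div_pow, h3]
  field_simp
  rw [h3]
  ring

lemma eigen_equation_inv_two_mul_sq_add_three {p : ℝ} (hp : p ≠ 0) :
    (√(p ^ 2 + 2))⁻¹ * (2 * p ^ 2 + 3)⁻¹ +
        2 * ∫ q, Tker (2 * π / 3) p q * (2 * q ^ 2 + 3)⁻¹ =
      √2 * (2 * p ^ 2 + 3)⁻¹ := by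
  simp_rw [Tker_two_pi_div_three, mul_assoc (√3 / π), ← mul_inv]
  rw [integral_const_mul, integral_inv_quadratic_mul_quadratic hp, sqrt_div' 3 two_pos.le,
    show 3 * p ^ 2 + 6 = 3 * (p ^ 2 + 2) by ring, sqrt_mul' 3 (by positivity)]
  have h3 : 0 < √3 := by positivity
  have hr : 0 < √(p ^ 2 + 2) := by positivity
  field_simp
  ring

/-- The eigenvalue equation `(T̂₀ + 2T̂_{2π/3})φ = √2·φ` for `φ(p) = 6^{3/4}/(√π (2p²+3))`,
where `T̂₀` is multiplication by `(p²+2)^{−1/2}`; in particular `φ ∈ L²(ℝ)`. -/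
theorem exact_eigenfunction_T0_plus_two_T2piOver3 :
    MemLp (fun p : ℝ => (6 : ℝ) ^ ((3 : ℝ) / 4) / (Real.sqrt Real.pi * (2 * p ^ 2 + 3))) 2
      (volume : Measure ℝ) ∧
    ∀ᵐ p : ℝ,
      (Real.sqrt (p ^ 2 + 2))⁻¹ *
          ((6 : ℝ) ^ ((3 : ℝ) / 4) / (Real.sqrt Real.pi * (2 * p ^ 2 + 3))) +
        2 * ∫ q : ℝ, Tker (2 * Real.pi / 3) p q *
          ((6 : ℝ) ^ ((3 : ℝ) / 4) / (Real.sqrt Real.pi * (2 * q ^ 2 + 3))) =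
      Real.sqrt 2 * ((6 : ℝ) ^ ((3 : ℝ) / 4) / (Real.sqrt Real.pi * (2 * p ^ 2 + 3))) := by
  set C : ℝ := 6 ^ ((3 : ℝ) / 4) / √π
  have hφ (y : ℝ) : 6 ^ ((3 : ℝ) / 4) / (√π * y) = C * y⁻¹ := by
    rw [← div_div, div_eq_mul_inv]
  simp only [hφ]
  refine ⟨memLp_two_inv_two_mul_sq_add_three.const_mul C, ?_⟩
  filter_upwards [volume.ae_ne 0] with p hp
  simp_rw [mul_left_comm _ C, integral_const_mul]
  linear_combination C * eigen_equation_inv_two_mul_sq_add_three hp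
end
end
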